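/- arXiv:1907.07250 — 2 statements merged into one kernel-verified Lean document; each statement's English description precedes it below -/
import Mathlib

section
/- Let α > 0 and let ε : ℕ → [α, ∞) be a function. Then there exists a constant K > 0 such that the following holds: let q = q(n) ≥ K·n^(1 + 1/(2·ε(n))) and let χ be a random q-colouring of the hypercube Q_n. Then with high probability every bijection f ∈ Isom^(1)(χ) satisfies f^(−1) ∈ Cluster¹_{ε(n)·n²}. -/
/-!
An isomorphism of unit balls `B₁(f⁻¹ u) ≅ B₁(u)` fixes the centres, so for `f ∈ Isom¹(χ)` every
neighbour of `f⁻¹ u` has the colour `χ(f⁻¹ y)` of some neighbour `y` of `u`. Hence the set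
`R = Γ(f⁻¹(Γ(v)))`, which contains `Γ¹(f⁻¹(Γ(v)))`, sees at most the `binom(n,2) + n` colours of
`f⁻¹(Γ(Γ(v)))`, and a failure of the cluster bound at `v` makes `χ` use at least `m ≈ α n² / 2`
fewer colours on `R` than `|R| ≤ n²`. That forces `m` independent colour coincidences inside `R`,
an event of probability at most `2^|R| |R|^m q^(-m)`; a union bound over the `2^(n²)` possible
`R` is `o(1)` once `q ≥ 8^(2/α) n²`, which is what `q ≥ K n^(1 + 1/(2ε))` gives as long as
`ε(n) < (n+1)/(2n)`. For larger `ε(n)` the cluster bound holds for every bijection, as `|R| ≤ n²`.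
-/

open MeasureTheory Filter Set Asymptotics Topology

noncomputable section

/-- Vertices of the `n`-dimensional hypercube. -/
abbrev V (n : ℕ) : Type := Fin n → Bool

/-- The hypercube graph `Q_n`. -/
def Q (n : ℕ) : SimpleGraph (V n) :=
  SimpleGraph.fromRel (fun u v => hammingDist u v = 1)

/-- The neighbourhood of a vertex in `Q_n`. -/
def nbhd (n : ℕ) (v : V n) : Set (V n) := (Q n).neighborSet v

/-- The neighbourhood of a set of vertices. -/
def nbhdSet (n : ℕ) (A : Set (V n)) : Set (V n) := ⋃ v ∈ A, nbhd n v

/-- The set of vertices at graph distance exactly `k` from the set `A`. -/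
def sphereSet (n k : ℕ) (A : Set (V n)) : Set (V n) :=
  {w | (∃ v ∈ A, (Q n).dist v w = k) ∧ ∀ v ∈ A, k ≤ (Q n).dist v w}

/-- The ball of radius `r` about `v` (as a set of vertices). -/
def ball (n : ℕ) (v : V n) (r : ℕ) : Set (V n) := {w | (Q n).dist v w ≤ r}

/-- `χ^(r)(u) ≅ lam^(r)(w)` : the coloured `r`-balls around `u` (coloured by `χ`) and
`w` (coloured by `lam`) are isomorphic as coloured graphs. -/
def LocallyEq {C : Type} (n r : ℕ) (χ lam : V n → C) (u w : V n) : Prop :=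
  ∃ φ : ((Q n).induce (ball n u r)) ≃g ((Q n).induce (ball n w r)),
    ∀ x : ball n u r, χ x.1 = lam ((φ x).1)

/-- `d(χ^(r)(u), lam^(r)(w)) ≤ m` : some isomorphism of the `r`-balls realises at most `m`
colour disagreements. -/
def BallDistLE {C : Type} (n r : ℕ) (χ lam : V n → C) (u w : V n) (m : ℝ) : Prop :=
  ∃ φ : ((Q n).induce (ball n u r)) ≃g ((Q n).induce (ball n w r)),
    (({x : ball n u r | χ x.1 ≠ lam ((φ x).1)}.ncard : ℝ)) ≤ m

/-- A colouring is `r`-distinguishable if every `r`-locally equivalent colouring is obtained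
from it by a graph automorphism. -/
def Distinguishable {C : Type} (n r : ℕ) (χ : V n → C) : Prop :=
  ∀ lam : V n → C,
    (∃ f : V n ≃ V n, ∀ v, LocallyEq n r χ lam v (f v)) →
    ∃ g : (Q n) ≃g (Q n), lam = fun v => χ (g.symm v)

/-- `Isom^(r)(χ)` : the set of bijections `f` with `χ^(r)(v) ≅ (χ ∘ f⁻¹)^(r)(f v)` for all `v`. -/
def IsomSet {C : Type} (n r : ℕ) (χ : V n → C) : Set (V n ≃ V n) :=
  {f | ∀ v, LocallyEq n r χ (fun x => χ (f.symm x)) v (f v)}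

/-- `Cluster^r_R` : bijections `h` such that `|Γ^r(h(Γ(v)))| ≤ binom(n, r+1) + R` for all `v`. -/
def ClusterSet (n r : ℕ) (R : ℝ) : Set (V n ≃ V n) :=
  {h | ∀ v, ((sphereSet n r (⇑h '' nbhd n v)).ncard : ℝ) ≤ (n.choose (r+1) : ℝ) + R}

/-- `g` is a dual of `f` (at level `s`): `|f(Γ(v)) ∩ Γ(g(v))| ≥ n − s` for all `v`. -/
def IsDualF (n : ℕ) (s : ℝ) (f g : V n → V n) : Prop :=
  ∀ v, (n : ℝ) - s ≤ (((f '' nbhd n v) ∩ nbhd n (g v)).ncard : ℝ)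

/-- `f` is `s`-approximately local: it has a dual at level `s`. -/
def ApproxLocalF (n : ℕ) (s : ℝ) (f : V n → V n) : Prop :=
  ∃ g : V n → V n, IsDualF n s f g

/-- `Local_s` : the set of `s`-approximately local bijections. -/
def LocalSet (n : ℕ) (s : ℝ) : Set (V n ≃ V n) :=
  {f | ApproxLocalF n s ⇑f}

/-- `Mono^t_s` : bijections in `Cluster¹_s` for which, for every `v`, at most one vertex `w`
has `|f(Γ(v)) ∩ Γ(w)| > t`. -/
def MonoSet (n : ℕ) (s t : ℝ) : Set (V n ≃ V n) :=
  {f | f ∈ ClusterSet n 1 s ∧ ∀ v w₁ w₂ : V n,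
      t < (((⇑f '' nbhd n v) ∩ nbhd n w₁).ncard : ℝ) →
      t < (((⇑f '' nbhd n v) ∩ nbhd n w₂).ncard : ℝ) → w₁ = w₂}

/-- The dual `f_⋆` of `f` : for each `v`, a vertex `w` maximising `|f(Γ(v)) ∩ Γ(w)|`
(which is the unique dual vertex whenever `f` is `s`-approximately local with `s < n/2`). -/
def dualF (n : ℕ) (f : V n → V n) : V n → V n :=
  fun v => Classical.epsilon fun w =>
    ∀ w', ((f '' nbhd n v) ∩ nbhd n w').ncard ≤ ((f '' nbhd n v) ∩ nbhd n w).ncard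

/-- The Bernoulli measure on `Bool`: `false` (colour 0) has probability `p`,
`true` (colour 1) has probability `1 - p`. -/
def bern (p : ℝ) : Measure Bool :=
  ENNReal.ofReal p • Measure.dirac false + ENNReal.ofReal (1 - p) • Measure.dirac true

/-- The law of a random `(p, 1-p)`-colouring of `Q_n`: i.i.d. Bernoulli colours. -/
def colMeasure (n : ℕ) (p : ℝ) : Measure (V n → Bool) :=
  Measure.pi fun _ => bern p

/-- The uniform measure on `Fin q`. -/
def unifFin (q : ℕ) : Measure (Fin q) :=
  ((q : ENNReal))⁻¹ • Measure.count

/-- The law of a random `q`-colouring of `Q_n`: i.i.d. uniform colours. -/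
def qColMeasure (n q : ℕ) : Measure (V n → Fin q) :=
  Measure.pi fun _ => unifFin q

open scoped ENNReal

section UniformColouring

variable {ι : Type}

lemma exists_retraction_of_card_image_add_le {β : Type} [Nonempty ι] [DecidableEq ι]
    [DecidableEq β]
    (χ : ι → β) {R : Finset ι} {m : ℕ} (h : (R.image χ).card + m ≤ R.card) :
    ∃ D ∈ R.powersetCard m, ∃ π : D → ↥(R \ D), ∀ d : D, χ d = χ (π d) := by
  set g := Function.invFunOn χ (R : Set ι)
  have hg : ∀ x ∈ R, g (χ x) ∈ R ∧ χ (g (χ x)) = χ x := fun x hx =>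
    ⟨Function.invFunOn_mem ⟨x, hx, rfl⟩, Function.invFunOn_eq ⟨x, hx, rfl⟩⟩
  set S := (R.image χ).image g
  have hS : m ≤ (R \ S).card := by
    have := Finset.le_card_sdiff S R
    have : S.card ≤ (R.image χ).card := Finset.card_image_le
    omega
  obtain ⟨D, hDS, hD⟩ := Finset.exists_subset_card_eq hS
  have hDR : D ⊆ R := hDS.trans Finset.sdiff_subset
  refine ⟨D, Finset.mem_powersetCard.2 ⟨hDR, hD⟩, fun d => ⟨g (χ d), ?_⟩, fun d => ?_⟩
  · refine Finset.mem_sdiff.2 ⟨(hg d (hDR d.2)).1, fun hmem => ?_⟩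
    exact (Finset.mem_sdiff.1 (hDS hmem)).2
      (Finset.mem_image_of_mem g (Finset.mem_image_of_mem χ (hDR d.2)))
  · exact (hg d (hDR d.2)).2.symm

variable [Fintype ι] {q : ℕ}

lemma unifFin_univ : unifFin q univ = if q = 0 then 0 else 1 := by
  split_ifs with hq
  · subst hq; simp [unifFin]
  · simp [unifFin, ENNReal.inv_mul_cancel (Nat.cast_ne_zero.2 hq) (ENNReal.natCast_ne_top q)]

instance : IsFiniteMeasure (unifFin q) :=
  ⟨by rw [unifFin_univ]; split_ifs <;> simp⟩

lemma isProbabilityMeasure_unifFin (hq : q ≠ 0) : IsProbabilityMeasure (unifFin q) :=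
  ⟨by simp [unifFin_univ, hq]⟩

lemma pi_unifFin_singleton (χ : ι → Fin q) :
    Measure.pi (fun _ : ι => unifFin q) {χ} = (q : ℝ≥0∞)⁻¹ ^ Fintype.card ι := by
  rw [← Set.univ_pi_singleton, Measure.pi_pi]
  simp [unifFin]

lemma pi_unifFin_apply (S : Set (ι → Fin q)) :
    Measure.pi (fun _ : ι => unifFin q) S = S.ncard * (q : ℝ≥0∞)⁻¹ ^ Fintype.card ι := by
  classical
  rw [← Set.coe_toFinset S, ← sum_measure_singleton, Set.ncard_coe_finset]
  simp only [pi_unifFin_singleton, Finset.sum_const, nsmul_eq_mul]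

lemma ncard_setOf_forall_eq_le {β : Type} [Fintype β] (D : Finset ι) (π : D → ι)
    (hπ : ∀ d, π d ∉ D) :
    {χ : ι → β | ∀ d : D, χ d = χ (π d)}.ncard ≤ Fintype.card β ^ (Fintype.card ι - D.card) := by
  classical
  have hinj : Set.InjOn (fun χ : ι → β => fun x : {x // x ∉ D} => χ x)
      {χ : ι → β | ∀ d : D, χ d = χ (π d)} := by
    intro χ hχ χ' hχ' heq
    have hout : ∀ x ∉ D, χ x = χ' x := fun x hx => congrFun heq ⟨x, hx⟩
    funext x
    by_cases hx : x ∈ D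
    · rw [hχ ⟨x, hx⟩, hχ' ⟨x, hx⟩, hout _ (hπ _)]
    · exact hout x hx
  calc _ ≤ (univ : Set ({x // x ∉ D} → β)).ncard :=
        Set.ncard_le_ncard_of_injOn _ (fun _ _ => mem_univ _) hinj
    _ = Fintype.card β ^ (Fintype.card ι - D.card) := by
        simp [Set.ncard_univ, Fintype.card_subtype_compl]

lemma pi_unifFin_setOf_forall_eq_le (hq : q ≠ 0) (D : Finset ι) (π : D → ι)
    (hπ : ∀ d, π d ∉ D) :
    Measure.pi (fun _ : ι => unifFin q) {χ | ∀ d : D, χ d = χ (π d)} ≤ (q : ℝ≥0∞)⁻¹ ^ D.card := by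
  have hcount := ncard_setOf_forall_eq_le (β := Fin q) D π hπ
  obtain ⟨k, hk⟩ := Nat.exists_eq_add_of_le' (Finset.card_le_univ D)
  rw [Fintype.card_fin, hk, Nat.add_sub_cancel] at hcount
  rw [pi_unifFin_apply, hk]
  calc _ ≤ ((q ^ k : ℕ) : ℝ≥0∞) * (q : ℝ≥0∞)⁻¹ ^ (k + D.card) := by gcongr
    _ = (q : ℝ≥0∞)⁻¹ ^ D.card := by
        rw [pow_add, ← mul_assoc, Nat.cast_pow, ← mul_pow,
          ENNReal.mul_inv_cancel (Nat.cast_ne_zero.2 hq) (ENNReal.natCast_ne_top q), one_pow,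
          one_mul]

lemma pi_unifFin_ncard_image_add_le [Nonempty ι] (hq : q ≠ 0) (R : Set ι) (m : ℕ) :
    Measure.pi (fun _ : ι => unifFin q) {χ | (χ '' R).ncard + m ≤ R.ncard} ≤
      ((2 ^ R.ncard * R.ncard ^ m : ℕ) : ℝ≥0∞) * (q : ℝ≥0∞)⁻¹ ^ m := by
  classical
  rw [Set.ncard_eq_toFinset_card' R]
  set R' := R.toFinset
  have hcover : {χ : ι → Fin q | (χ '' R).ncard + m ≤ R'.card} ⊆
      ⋃ D ∈ R'.powersetCard m, ⋃ π : D → ↥(R' \ D), {χ | ∀ d : D, χ d = χ (π d)} := by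
    intro χ hχ
    rw [mem_ofPred_eq, Set.ncard_eq_toFinset_card', Set.toFinset_image] at hχ
    obtain ⟨D, hD, π, hπ⟩ := exists_retraction_of_card_image_add_le χ hχ
    exact mem_biUnion hD (mem_iUnion.2 ⟨π, hπ⟩)
  calc _ ≤ ∑ D ∈ R'.powersetCard m, ∑ π : D → ↥(R' \ D),
        Measure.pi (fun _ : ι => unifFin q) {χ | ∀ d : D, χ d = χ (π d)} :=
        (measure_mono hcover).trans <| (measure_biUnion_finset_le _ _).trans <|
          Finset.sum_le_sum fun D _ => measure_iUnion_fintype_le _ _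
    _ ≤ ∑ D ∈ R'.powersetCard m, ∑ _π : D → ↥(R' \ D), (q : ℝ≥0∞)⁻¹ ^ m := by
        gcongr with D hD π
        rw [← (Finset.mem_powersetCard.1 hD).2]
        exact pi_unifFin_setOf_forall_eq_le hq D (fun d => π d)
          fun d => (Finset.mem_sdiff.1 (π d).2).2
    _ ≤ ∑ _D ∈ R'.powersetCard m, (R'.card ^ m : ℕ) * (q : ℝ≥0∞)⁻¹ ^ m := by
        gcongr with D hD
        rw [Finset.sum_const, Finset.card_univ, nsmul_eq_mul, Fintype.card_fun,
          Fintype.card_coe, Fintype.card_coe, (Finset.mem_powersetCard.1 hD).2]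
        gcongr
        exact Finset.sdiff_subset
    _ ≤ _ := by
        rw [Finset.sum_const, Finset.card_powersetCard, nsmul_eq_mul, ← mul_assoc]
        gcongr
        exact_mod_cast Nat.mul_le_mul_right _ (Nat.choose_le_two_pow _ _)

end UniformColouring

namespace Hypercube

variable {n : ℕ}

def flipBit (x : V n) (i : Fin n) : V n := fun j => xor (x j) (decide (j = i))

@[simp] lemma flipBit_apply (x : V n) (i j : Fin n) :
    flipBit x i j = xor (x j) (decide (j = i)) := rfl

lemma adj_iff {x y : V n} : (Q n).Adj x y ↔ hammingDist x y = 1 := by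
  rw [Q, SimpleGraph.fromRel_adj, hammingDist_comm y x, or_self, and_iff_right_iff_imp]
  rintro h rfl
  simp at h

lemma hammingDist_flipBit (x : V n) (i : Fin n) : hammingDist x (flipBit x i) = 1 := by
  rw [hammingDist, Finset.card_eq_one]
  refine ⟨i, Finset.ext fun j => ?_⟩
  rw [Finset.mem_filter, Finset.mem_singleton]
  by_cases h : j = i <;> simp [h]

lemma adj_flipBit (x : V n) (i : Fin n) : (Q n).Adj x (flipBit x i) :=
  adj_iff.2 (hammingDist_flipBit x i)

lemma exists_eq_flipBit_of_adj {x y : V n} (h : (Q n).Adj x y) : ∃ i, y = flipBit x i := by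
  rw [adj_iff, hammingDist, Finset.card_eq_one] at h
  obtain ⟨i, hi⟩ := h
  refine ⟨i, funext fun j => ?_⟩
  have hj := Finset.ext_iff.1 hi j
  simp only [Finset.mem_filter, Finset.mem_univ, true_and, Finset.mem_singleton] at hj
  cases hx : x j <;> cases hy : y j <;> simp_all

lemma flipBit_injective (x : V n) : Function.Injective (flipBit x) := by
  intro i j h
  by_contra hij
  simpa [hij] using congrFun h i

lemma flipBit_comm (x : V n) (i j : Fin n) :
    flipBit (flipBit x i) j = flipBit (flipBit x j) i := by
  funext k
  simp only [flipBit_apply, Bool.xor_assoc, Bool.xor_comm (decide (k = i))]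

lemma hammingDist_flipBit_flipBit (x : V n) {i j : Fin n} (h : i ≠ j) :
    hammingDist (flipBit x i) (flipBit x j) = 2 := by
  rw [hammingDist, ← Finset.card_pair h]
  congr 1
  ext k
  by_cases hi : k = i <;> by_cases hj : k = j <;> simp_all

lemma nbhd_eq_range (x : V n) : nbhd n x = range (flipBit x) := by
  ext y
  exact ⟨fun h => (exists_eq_flipBit_of_adj h).imp fun _ h => h.symm,
    by rintro ⟨i, rfl⟩; exact adj_flipBit x i⟩

lemma ncard_nbhd (x : V n) : (nbhd n x).ncard = n := by
  rw [nbhd_eq_range, Set.ncard_range_of_injective (flipBit_injective x), Nat.card_eq_fintype_card,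
    Fintype.card_fin]

lemma not_adj_of_adj_of_adj {u x y : V n} (hx : (Q n).Adj u x) (hy : (Q n).Adj u y) :
    ¬ (Q n).Adj x y := by
  obtain ⟨i, rfl⟩ := exists_eq_flipBit_of_adj hx
  obtain ⟨j, rfl⟩ := exists_eq_flipBit_of_adj hy
  rcases eq_or_ne i j with rfl | hij
  · exact (Q n).loopless.irrefl _
  · rw [adj_iff, hammingDist_flipBit_flipBit u hij]
    decide

lemma reachable (x y : V n) : (Q n).Reachable x y := by
  suffices h : ∀ s : Finset (Fin n), (Q n).Reachable x fun j => xor (x j) (decide (j ∈ s)) by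
    convert h (Finset.univ.filter fun j => x j ≠ y j) using 1
    funext j
    cases hx : x j <;> cases hy : y j <;> simp [hx, hy]
  intro s
  induction s using Finset.induction_on with
  | empty => simp
  | insert i s hi ih =>
    have hstep : flipBit (fun j => xor (x j) (decide (j ∈ s))) i =
        fun j => xor (x j) (decide (j ∈ insert i s)) := by
      funext j
      by_cases hj : j = i
      · subst hj; simp [hi]
      · simp [hj]
    exact ih.trans (hstep ▸ (adj_flipBit _ i).reachable)

lemma mem_ball_one {u y : V n} : y ∈ ball n u 1 ↔ y = u ∨ (Q n).Adj u y := by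
  rw [show y ∈ ball n u 1 ↔ (Q n).dist u y ≤ 1 from Iff.rfl, Nat.le_one_iff_eq_zero_or_eq_one,
    (reachable u y).dist_eq_zero_iff, SimpleGraph.dist_eq_one_iff_adj, eq_comm]

lemma center_mem_ball (u : V n) : u ∈ ball n u 1 := mem_ball_one.2 (Or.inl rfl)

lemma mem_ball_of_adj {u y : V n} (h : (Q n).Adj u y) : y ∈ ball n u 1 := mem_ball_one.2 (Or.inr h)

/-- The centre is the only vertex of a unit ball with two distinct neighbours in it, since `Q n`
has no triangles. -/
lemma ballIso_center (hn : 2 ≤ n) {u w : V n}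
    (φ : (Q n).induce (ball n u 1) ≃g (Q n).induce (ball n w 1)) :
    φ ⟨u, center_mem_ball u⟩ = ⟨w, center_mem_ball w⟩ := by
  by_contra hne
  have hleaf : ∀ y : ball n u 1, (Q n).Adj u y → (φ y : V n) = w := by
    intro y hy
    have hadj : (Q n).Adj (φ ⟨u, center_mem_ball u⟩) (φ y) :=
      SimpleGraph.induce_adj.1 (φ.map_adj_iff.2 (SimpleGraph.induce_adj.2 hy))
    by_contra hyw
    have hw : (Q n).Adj w (φ ⟨u, center_mem_ball u⟩) :=
      (mem_ball_one.1 (φ _).2).resolve_left fun h => hne (Subtype.ext h)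
    exact not_adj_of_adj_of_adj hw ((mem_ball_one.1 (φ y).2).resolve_left hyw) hadj
  have h01 : (⟨0, by omega⟩ : Fin n) ≠ ⟨1, by omega⟩ := by simp [Fin.ext_iff]
  have hsame := hleaf ⟨_, mem_ball_of_adj (adj_flipBit u _)⟩ (adj_flipBit u ⟨0, by omega⟩) |>.trans
    (hleaf ⟨_, mem_ball_of_adj (adj_flipBit u _)⟩ (adj_flipBit u ⟨1, by omega⟩)).symm
  exact h01 (flipBit_injective u (congrArg Subtype.val (φ.injective (Subtype.ext hsame))))

lemma exists_adj_eq_of_locallyEq {C : Type} (hn : 2 ≤ n) {χ lam : V n → C} {w u x : V n}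
    (h : LocallyEq n 1 χ lam w u) (hx : (Q n).Adj w x) : ∃ y, (Q n).Adj u y ∧ χ x = lam y := by
  obtain ⟨φ, hφ⟩ := h
  have hadj := φ.map_adj_iff.2 (SimpleGraph.induce_adj.2 hx :
    ((Q n).induce (ball n w 1)).Adj ⟨w, center_mem_ball w⟩ ⟨x, mem_ball_of_adj hx⟩)
  rw [ballIso_center hn φ] at hadj
  exact ⟨_, SimpleGraph.induce_adj.1 hadj, hφ ⟨x, mem_ball_of_adj hx⟩⟩

lemma image_nbhdSet_subset {C : Type} (hn : 2 ≤ n) {χ : V n → C} {f : V n ≃ V n}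
    (hf : f ∈ IsomSet n 1 χ) (A : Set (V n)) :
    χ '' nbhdSet n (f.symm '' A) ⊆ (χ ∘ f.symm) '' nbhdSet n A := by
  rintro _ ⟨x, hx, rfl⟩
  simp only [nbhdSet, mem_iUnion, exists_prop, mem_image] at hx
  obtain ⟨_, ⟨a, ha, rfl⟩, hxa⟩ := hx
  have hloc := hf (f.symm a)
  rw [Equiv.apply_symm_apply] at hloc
  obtain ⟨y, hay, hcol⟩ := exists_adj_eq_of_locallyEq hn hloc hxa
  exact ⟨y, mem_biUnion ha hay, hcol.symm⟩

lemma sphereSet_one_subset_nbhdSet (A : Set (V n)) : sphereSet n 1 A ⊆ nbhdSet n A := by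
  rintro x ⟨⟨a, ha, hdist⟩, -⟩
  exact mem_biUnion ha (SimpleGraph.dist_eq_one_iff_adj.1 hdist)

lemma ncard_nbhdSet_range_le {k : ℕ} (t : Fin k → V n) : (nbhdSet n (range t)).ncard ≤ k * n := by
  rw [nbhdSet, biUnion_range]
  calc _ ≤ ∑ i, (nbhd n (t i)).ncard := ncard_iUnion_le_of_fintype _
    _ = k * n := by simp [ncard_nbhd]

/-- Second neighbourhoods are indexed by unordered pairs of coordinates: flipping `i` then `j`. -/
lemma ncard_nbhdSet_nbhd_le (v : V n) : (nbhdSet n (nbhd n v)).ncard ≤ n.choose 2 + n := by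
  have hsub : nbhdSet n (nbhd n v) ⊆
      range (Sym2.lift ⟨fun i j => flipBit (flipBit v i) j, fun i j => flipBit_comm v i j⟩) := by
    intro z hz
    simp only [nbhdSet, mem_iUnion, exists_prop] at hz
    obtain ⟨u, hu, hz⟩ := hz
    obtain ⟨i, rfl⟩ := exists_eq_flipBit_of_adj hu
    obtain ⟨j, rfl⟩ := exists_eq_flipBit_of_adj hz
    exact ⟨s(i, j), rfl⟩
  calc _ ≤ _ := ncard_le_ncard hsub
    _ ≤ (univ : Set (Sym2 (Fin n))).ncard := by rw [← image_univ]; exact ncard_image_le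
    _ = n.choose 2 + n := by
        rw [ncard_univ, Nat.card_eq_fintype_card, Sym2.card, Fintype.card_fin, Nat.choose_succ_succ,
          Nat.choose_one_right, add_comm]

lemma image_nbhd_eq_range (g : V n → V n) (v : V n) : g '' nbhd n v = range (g ∘ flipBit v) := by
  rw [nbhd_eq_range, range_comp]

lemma mem_clusterSet_one_of_le {ε : ℝ} (h : (n : ℝ) + 1 ≤ 2 * n * ε) (g : V n ≃ V n) :
    g ∈ ClusterSet n 1 (ε * n ^ 2) := by
  intro v
  have hsphere : (sphereSet n 1 (g '' nbhd n v)).ncard ≤ n * n := by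
    refine (ncard_le_ncard (sphereSet_one_subset_nbhdSet _)).trans ?_
    rw [image_nbhd_eq_range]
    exact ncard_nbhdSet_range_le _
  have hsphere' : ((sphereSet n 1 (g '' nbhd n v)).ncard : ℝ) ≤ n * n := by exact_mod_cast hsphere
  rw [Nat.cast_choose_two]
  nlinarith [(Nat.cast_nonneg n : (0 : ℝ) ≤ n)]

lemma exists_ncard_image_add_le_of_symm_notMem_clusterSet {C : Type} (hn : 2 ≤ n)
    {χ : V n → C} {f : V n ≃ V n} (hf : f ∈ IsomSet n 1 χ) {s : ℝ} {m : ℕ}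
    (hm : (m : ℝ) + n ≤ s) (hcl : f.symm ∉ ClusterSet n 1 s) :
    ∃ t : Fin n → V n, (χ '' nbhdSet n (range t)).ncard + m ≤ (nbhdSet n (range t)).ncard := by
  simp only [ClusterSet, mem_ofPred_eq, not_forall, not_le] at hcl
  obtain ⟨v, hv⟩ := hcl
  refine ⟨f.symm ∘ flipBit v, ?_⟩
  rw [← image_nbhd_eq_range]
  have hsphere := ncard_le_ncard (sphereSet_one_subset_nbhdSet (f.symm '' nbhd n v))
  have hcol : (χ '' nbhdSet n (f.symm '' nbhd n v)).ncard ≤ n.choose 2 + n :=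
    (ncard_le_ncard (image_nbhdSet_subset hn hf _)).trans
      ((ncard_image_le (toFinite _)).trans (ncard_nbhdSet_nbhd_le v))
  have hsphere' : ((sphereSet n 1 (f.symm '' nbhd n v)).ncard : ℝ) ≤
      (nbhdSet n (f.symm '' nbhd n v)).ncard := by exact_mod_cast hsphere
  have hcol' : ((χ '' nbhdSet n (f.symm '' nbhd n v)).ncard : ℝ) ≤ n.choose 2 + n := by
    exact_mod_cast hcol
  have : ((χ '' nbhdSet n (f.symm '' nbhd n v)).ncard : ℝ) + m <
      (nbhdSet n (f.symm '' nbhd n v)).ncard := by linarith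
  exact_mod_cast this.le

end Hypercube

open Hypercube

lemma sq_div_two_le_rpow {n : ℕ} (hn : 1 ≤ n) {ε : ℝ} (hε : 0 < ε) (h : 2 * n * ε < n + 1) :
    (n : ℝ) ^ 2 / 2 ≤ (n : ℝ) ^ (1 + 1 / (2 * ε)) := by
  have hn0 : (0 : ℝ) < n := by exact_mod_cast hn
  have hroot : (n : ℝ) ^ ((n : ℝ) + 1)⁻¹ ≤ 2 := by
    rw [Real.rpow_inv_le_iff_of_pos hn0.le (by norm_num) (by positivity)]
    have : n ≤ 2 ^ (n + 1) := Nat.lt_two_pow_self.le.trans (Nat.pow_le_pow_right two_pos n.le_succ)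
    exact_mod_cast this
  have hexp : 2 - ((n : ℝ) + 1)⁻¹ ≤ 1 + 1 / (2 * ε) := by
    have : (n : ℝ) / (n + 1) ≤ 1 / (2 * ε) := by
      rw [div_le_div_iff₀ (by positivity) (by positivity)]
      linarith
    have hsplit : 2 - ((n : ℝ) + 1)⁻¹ = 1 + n / (n + 1) := by field_simp; ring
    linarith
  calc (n : ℝ) ^ 2 / 2 ≤ n ^ 2 / n ^ ((n : ℝ) + 1)⁻¹ :=
        div_le_div_of_nonneg_left (by positivity) (by positivity) hroot
    _ = n ^ (2 - ((n : ℝ) + 1)⁻¹) := by rw [Real.rpow_sub hn0, Real.rpow_two]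
    _ ≤ _ := Real.rpow_le_rpow_of_exponent_le (by exact_mod_cast hn) hexp

lemma two_pow_mul_le_pow {α : ℝ} (hα : 0 < α) {n m q : ℕ} (hm : α * n ^ 2 / 2 ≤ m)
    (hq : 8 ^ (2 / α) * (n : ℝ) ^ 2 ≤ q) :
    2 ^ n * ((2 ^ n) ^ n * (2 ^ (n * n) * (n * n) ^ m)) ≤ q ^ m := by
  have h8 : (8 : ℝ) ^ (n ^ 2) ≤ ((8 : ℝ) ^ (2 / α)) ^ m := by
    rw [← Real.rpow_mul_natCast (by norm_num), ← Real.rpow_natCast 8 (n ^ 2)]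
    apply Real.rpow_le_rpow_of_exponent_le (by norm_num)
    rw [div_mul_eq_mul_div, le_div_iff₀ hα]
    push_cast
    linarith
  have h2 : (2 : ℝ) ^ n ≤ 2 ^ (n ^ 2) :=
    pow_le_pow_right₀ one_le_two (Nat.le_self_pow two_ne_zero n)
  have : (2 : ℝ) ^ n * ((2 ^ n) ^ n * (2 ^ (n * n) * (n * n) ^ m)) ≤ q ^ m :=
    calc (2 : ℝ) ^ n * ((2 ^ n) ^ n * (2 ^ (n * n) * (n * n) ^ m))
        ≤ 2 ^ (n ^ 2) * ((2 ^ n) ^ n * (2 ^ (n * n) * (n * n) ^ m)) := by gcongr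
      _ = 8 ^ (n ^ 2) * ((n : ℝ) ^ 2) ^ m := by
          rw [show (8 : ℝ) ^ (n ^ 2) = 2 ^ (n ^ 2 * 3) by rw [pow_mul']; norm_num]; ring
      _ ≤ (8 ^ (2 / α)) ^ m * ((n : ℝ) ^ 2) ^ m := by gcongr
      _ = (8 ^ (2 / α) * (n : ℝ) ^ 2) ^ m := (mul_pow _ _ _).symm
      _ ≤ (q : ℝ) ^ m := by gcongr
  exact_mod_cast this

lemma isProbabilityMeasure_qColMeasure {n q : ℕ} (hq : q ≠ 0) :
    IsProbabilityMeasure (qColMeasure n q) := by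
  have := isProbabilityMeasure_unifFin hq
  unfold qColMeasure
  infer_instance

lemma ne_zero_of_mul_rpow_le {K e : ℝ} (hK : 0 < K) {n q : ℕ} (hn : 1 ≤ n)
    (h : K * (n : ℝ) ^ e ≤ q) : q ≠ 0 := by
  have : (0 : ℝ) < q := (mul_pos hK (Real.rpow_pos_of_pos (by exact_mod_cast hn) e)).trans_le h
  exact_mod_cast this.ne'

lemma natCast_mul_inv_pow_le_two_inv_pow {N n m q : ℕ} (h : 2 ^ n * N ≤ q ^ m) :
    (N : ℝ≥0∞) * (q : ℝ≥0∞)⁻¹ ^ m ≤ 2⁻¹ ^ n := by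
  rw [← ENNReal.inv_pow, ← div_eq_mul_inv]
  refine ENNReal.div_le_of_le_mul ?_
  calc (N : ℝ≥0∞) = 2⁻¹ ^ n * ((2 ^ n * N : ℕ) : ℝ≥0∞) := by
        push_cast
        rw [← mul_assoc, ← mul_pow, ENNReal.inv_mul_cancel two_ne_zero ENNReal.ofNat_ne_top,
          one_pow, one_mul]
    _ ≤ 2⁻¹ ^ n * (q : ℝ≥0∞) ^ m := by gcongr; exact_mod_cast h

lemma qColMeasure_iUnion_deficient_le {n q : ℕ} (hq : q ≠ 0) (m : ℕ) :
    qColMeasure n q (⋃ t : Fin n → V n,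
        {χ | (χ '' nbhdSet n (range t)).ncard + m ≤ (nbhdSet n (range t)).ncard}) ≤
      (((2 ^ n) ^ n * (2 ^ (n * n) * (n * n) ^ m) : ℕ) : ℝ≥0∞) * (q : ℝ≥0∞)⁻¹ ^ m := by
  calc _ ≤ ∑ t : Fin n → V n, qColMeasure n q
        {χ | (χ '' nbhdSet n (range t)).ncard + m ≤ (nbhdSet n (range t)).ncard} :=
        measure_iUnion_fintype_le _ _
    _ ≤ ∑ _t : Fin n → V n, ((2 ^ (n * n) * (n * n) ^ m : ℕ) : ℝ≥0∞) * (q : ℝ≥0∞)⁻¹ ^ m := by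
        gcongr with t
        refine (pi_unifFin_ncard_image_add_le hq _ m).trans ?_
        have := ncard_nbhdSet_range_le t
        gcongr
        exact one_le_two
    _ = _ := by simp [mul_assoc]

lemma qColMeasure_isom_not_cluster_le {α ε : ℝ} (hα : 0 < α) (hε : α ≤ ε) {n q : ℕ}
    (hn : 2 ≤ n) (hαn : 4 ≤ α * n) (hq : 2 * 8 ^ (2 / α) * (n : ℝ) ^ (1 + 1 / (2 * ε)) ≤ q) :
    qColMeasure n q {χ | ∀ f ∈ IsomSet n 1 χ, f.symm ∈ ClusterSet n 1 (ε * n ^ 2)}ᶜ ≤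
      2⁻¹ ^ n := by
  rcases le_or_gt ((n : ℝ) + 1) (2 * n * ε) with hbig | hsmall
  · simp [mem_clusterSet_one_of_le hbig]
  set m := ⌈α * n ^ 2 / 2⌉₊
  have hsq : 8 ^ (2 / α) * (n : ℝ) ^ 2 ≤ q := by
    have := sq_div_two_le_rpow (by omega) (hα.trans_le hε) hsmall
    nlinarith [Real.rpow_pos_of_pos (by norm_num : (0 : ℝ) < 8) (2 / α)]
  have hq0 : q ≠ 0 := by
    have : (0 : ℝ) < q := lt_of_lt_of_le (by positivity) hsq
    exact_mod_cast this.ne'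
  have hm : (m : ℝ) + n ≤ ε * n ^ 2 := by
    have := Nat.ceil_lt_add_one (by positivity : 0 ≤ α * (n : ℝ) ^ 2 / 2)
    have : (2 : ℝ) ≤ n := by exact_mod_cast hn
    nlinarith
  have hsub : {χ : V n → Fin q | ∀ f ∈ IsomSet n 1 χ, f.symm ∈ ClusterSet n 1 (ε * n ^ 2)}ᶜ ⊆
      ⋃ t : Fin n → V n,
        {χ | (χ '' nbhdSet n (range t)).ncard + m ≤ (nbhdSet n (range t)).ncard} := by
    intro χ hχ
    simp only [mem_compl_iff, mem_ofPred_eq, not_forall, exists_prop] at hχ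
    obtain ⟨f, hf, hcl⟩ := hχ
    exact mem_iUnion.2 (exists_ncard_image_add_le_of_symm_notMem_clusterSet hn hf hm hcl)
  exact (measure_mono hsub).trans <| (qColMeasure_iUnion_deficient_le hq0 m).trans <|
    natCast_mul_inv_pow_le_two_inv_pow (two_pow_mul_le_pow hα (Nat.le_ceil _) hsq)

lemma tendsto_measure_nhds_one_of_compl {ι : Type*} {l : Filter ι} {Ω : ι → Type*}
    [∀ i, MeasurableSpace (Ω i)] {μ : ∀ i, Measure (Ω i)} {s : ∀ i, Set (Ω i)}
    (hμ : ∀ᶠ i in l, IsProbabilityMeasure (μ i)) (h : Tendsto (fun i => μ i (s i)ᶜ) l (𝓝 0)) :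
    Tendsto (fun i => μ i (s i)) l (𝓝 1) := by
  have hlow : Tendsto (fun i => 1 - μ i (s i)ᶜ) l (𝓝 1) := by
    simpa using ENNReal.Tendsto.sub tendsto_const_nhds h (Or.inl ENNReal.one_ne_top)
  refine tendsto_of_tendsto_of_tendsto_of_le_of_le' hlow tendsto_const_nhds ?_ ?_
  · filter_upwards [hμ] with i hi
    rw [tsub_le_iff_right, ← measure_univ (μ := μ i), ← union_compl_self (s i)]
    exact measure_union_le _ _
  · filter_upwards [hμ] with i hi using prob_le_one

/-- Lemma 2.7 (1scott): with high probability every `f ∈ Isom^(1)(χ)` has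
`f⁻¹ ∈ Cluster¹_{ε(n) n²}`. -/
theorem isom_one_inverse_cluster
    (α : ℝ) (hα : 0 < α) (ε : ℕ → ℝ) (hε : ∀ n, α ≤ ε n) :
    ∃ K : ℝ, 0 < K ∧ ∀ q : ℕ → ℕ,
      (∀ n : ℕ, K * (n : ℝ) ^ (1 + 1 / (2 * ε n)) ≤ q n) →
      Tendsto (fun n => qColMeasure n (q n)
        {χ | ∀ f ∈ IsomSet n 1 χ,
          f.symm ∈ ClusterSet n 1 (ε n * (n : ℝ) ^ 2)}) atTop (𝓝 1) := by
  refine ⟨2 * 8 ^ (2 / α), by positivity, fun q hq => ?_⟩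
  refine tendsto_measure_nhds_one_of_compl ?_ ?_
  · filter_upwards [eventually_ge_atTop 1] with n hn
    exact isProbabilityMeasure_qColMeasure (ne_zero_of_mul_rpow_le (by positivity) hn (hq n))
  · refine tendsto_of_tendsto_of_tendsto_of_le_of_le' tendsto_const_nhds
      (ENNReal.tendsto_pow_atTop_nhds_zero_of_lt_one (ENNReal.inv_lt_one.2 ENNReal.one_lt_two))
      (.of_forall fun _ => bot_le) ?_
    filter_upwards [eventually_ge_atTop 2, eventually_ge_atTop ⌈4 / α⌉₊] with n hn hαn
    refine qColMeasure_isom_not_cluster_le hα (hε n) hn ?_ (hq n)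
    rw [Nat.ceil_le, div_le_iff₀ hα] at hαn
    linarith

end
end

section
/- Let t : ℕ → ℕ with t(n) ≥ 5, t(n) → ∞ and t(n) = o(n) as n → ∞, and let s : ℕ → ℝ be a function such that 1 − 2·s(n)/n − 14·√(t(n)/n) ≥ 0. Then for all sufficiently large n the following holds: if A ⊆ V(Q_n) with |A| = n and |Γ(A)| ≤ binom(n,2) + s(n)·n, and there do not exist distinct vertices w₁, w₂ ∈ V(Q_n) such that |A ∩ Γ(w_i)| > t(n) for both i = 1, 2, then there exists a vertex w ∈ V(Q_n) for which |Γ(w) ∩ A| ≥ n·(1 − 2·s(n)/n − 14·√(t(n)/n))^(1/2). -/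
open MeasureTheory Filter Set Asymptotics Topology

noncomputable section

/-!
Let `w` be the only vertex that may see more than `t` points of `A` (any vertex if there is
none), `d = |A ∩ Γ(w)|`, and `B` the points of `A` at distance at least 2 from `w`, so
`|B| ≥ n - d - 1`. Inside the sphere of radius 2 about `w`, `Γ(A)` contains every vertex adjacent
to `A ∩ Γ(w)`: all but `C(n - d, 2)` of them. Outside the ball of radius 2, each `b ∈ B` has at
least `n - 3` neighbours, and two points of `B` share neighbours only when at distance 2 (and
then at most two), so Bonferroni loses at most the number `P` of such ordered pairs. By
Cauchy–Schwarz, `P² ≤ |B| ∑_b e(b)²`, where `e(b)` counts the points of `B` at distance 2 from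
`b`; the pairs counted by `e(b)²` either differ from `b` in a common coordinate `i`, and then
lie in the neighbourhood of the vertex `b` flipped at `i` (at most `t` of them), or lie at
distance 4 from each other, and a pair at distance 4 has at most 6 midpoints. Hence
`P² ≤ 6|B|³ + 2t|B|P`, so `P = O(tn + n^{3/2})`, and `|Γ(A)| ≤ C(n,2) + sn` turns into
`d² ≥ n² (1 - 2s/n - 14 √(t/n))`.
-/

open Finset
open scoped symmDiff

lemma Finset.card_symmDiff_add_two_mul_card_inter {α : Type*} [DecidableEq α] (s t : Finset α) :
    #(s ∆ t) + 2 * #(s ∩ t) = #s + #t := by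
  rw [symmDiff_eq_sup_sdiff_inf, sup_eq_union, inf_eq_inter,
    card_sdiff_of_subset inter_subset_union]
  have := card_union_add_card_inter s t
  have := card_le_card (inter_subset_union (s := s) (t := t))
  omega

lemma Finset.two_mul_sum_card_le_two_mul_card_biUnion_add_sum_offDiag {ι α : Type*}
    [DecidableEq ι] [DecidableEq α] (I : Finset ι) (F : ι → Finset α) :
    2 * ∑ i ∈ I, #(F i) ≤ 2 * #(I.biUnion F) + ∑ p ∈ I.offDiag, #(F p.1 ∩ F p.2) := by
  induction I using Finset.induction_on with
  | empty => simp
  | @insert a I ha ih =>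
    have hdisj₁ : Disjoint (I.offDiag ∪ {a} ×ˢ I) (I ×ˢ {a}) := by
      rw [Finset.disjoint_union_left]
      simp only [Finset.disjoint_left, Finset.mem_offDiag, Finset.mem_product,
        Finset.mem_singleton]
      exact ⟨fun p hp hp' => ha (hp'.2 ▸ hp.2.1), fun p hp hp' => ha (hp'.2 ▸ hp.2)⟩
    have hdisj₂ : Disjoint I.offDiag ({a} ×ˢ I) := by
      simp only [Finset.disjoint_left, Finset.mem_offDiag, Finset.mem_product,
        Finset.mem_singleton]
      exact fun p hp hp' => ha (hp'.1 ▸ hp.1)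
    have hcross : #(F a ∩ I.biUnion F) ≤ ∑ i ∈ I, #(F a ∩ F i) := by
      rw [inter_biUnion]
      exact card_biUnion_le
    have hunion := card_union_add_card_inter (F a) (I.biUnion F)
    rw [biUnion_insert, sum_insert ha, offDiag_insert ha, sum_union hdisj₁, sum_union hdisj₂,
      sum_product, sum_product]
    simp only [sum_singleton, inter_comm (F _) (F a)]
    omega

namespace Hypercube

variable {n : ℕ}

def diffSet (u v : V n) : Finset (Fin n) := {i | u i ≠ v i}

def flipCoords (p : Finset (Fin n)) (b : V n) : V n := fun i => if i ∈ p then !b i else b i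

def hammingSphere (b : V n) (k : ℕ) : Finset (V n) := {x | hammingDist b x = k}

lemma card_diffSet (u v : V n) : #(diffSet u v) = hammingDist u v := rfl

@[simp]
lemma mem_diffSet {u v : V n} {i : Fin n} : i ∈ diffSet u v ↔ u i ≠ v i := by
  simp [diffSet]

@[simp]
lemma mem_hammingSphere {b x : V n} {k : ℕ} : x ∈ hammingSphere b k ↔ hammingDist b x = k := by
  simp [hammingSphere]

lemma diffSet_comm (u v : V n) : diffSet u v = diffSet v u := by
  ext i
  simp [ne_comm]

lemma diffSet_symmDiff_diffSet (u v w : V n) : diffSet u v ∆ diffSet v w = diffSet u w := by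
  ext i
  simp only [Finset.mem_symmDiff, mem_diffSet]
  cases u i <;> cases v i <;> cases w i <;> decide

lemma diffSet_flipCoords (p : Finset (Fin n)) (b : V n) : diffSet b (flipCoords p b) = p := by
  ext i
  by_cases h : i ∈ p <;> simp [flipCoords, h]

lemma flipCoords_diffSet (b c : V n) : flipCoords (diffSet b c) b = c := by
  funext i
  simp only [flipCoords, mem_diffSet]
  cases b i <;> cases c i <;> decide

def diffEquiv (b : V n) : V n ≃ Finset (Fin n) where
  toFun := diffSet b
  invFun p := flipCoords p b
  left_inv := flipCoords_diffSet b
  right_inv p := diffSet_flipCoords p b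

lemma hammingDist_flipCoords (p : Finset (Fin n)) (b : V n) :
    hammingDist b (flipCoords p b) = #p := by
  rw [← card_diffSet, diffSet_flipCoords]

lemma hammingDist_add_two_mul_card_inter (u v w : V n) :
    hammingDist u w + 2 * #(diffSet u v ∩ diffSet v w) = hammingDist u v + hammingDist v w := by
  rw [← card_diffSet, ← diffSet_symmDiff_diffSet u v w, card_symmDiff_add_two_mul_card_inter]
  rfl

lemma diffSet_subset_of_hammingDist_add_eq {u v w : V n}
    (h : hammingDist u v + hammingDist v w = hammingDist u w) : diffSet u v ⊆ diffSet u w := by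
  have hinter : diffSet u v ∩ diffSet v w = ∅ := by
    have := hammingDist_add_two_mul_card_inter u v w
    exact card_eq_zero.1 (by omega)
  intro i hi
  rw [← diffSet_symmDiff_diffSet u v w, Finset.mem_symmDiff]
  exact Or.inl ⟨hi, fun hi' => by simpa [hinter] using mem_inter.2 ⟨hi, hi'⟩⟩

lemma hammingDist_flipCoords_singleton_add_one {b c : V n} {i : Fin n} (hi : i ∈ diffSet b c) :
    hammingDist (flipCoords {i} b) c + 1 = hammingDist b c := by
  have := hammingDist_add_two_mul_card_inter (flipCoords {i} b) b c
  rw [diffSet_comm, diffSet_flipCoords, Finset.singleton_inter_of_mem hi, hammingDist_comm _ b,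
    hammingDist_flipCoords, Finset.card_singleton] at this
  omega

lemma card_filter_diffSet_subset (b : V n) (D : Finset (Fin n)) (k : ℕ) :
    #{x ∈ hammingSphere b k | diffSet b x ⊆ D} = (#D).choose k := by
  rw [← card_powersetCard]
  refine card_equiv (diffEquiv b) fun x => ?_
  simp [diffEquiv, mem_powersetCard, card_diffSet, and_comm]

lemma card_hammingSphere (b : V n) (k : ℕ) : #(hammingSphere b k) = n.choose k := by
  simpa using card_filter_diffSet_subset b univ k

lemma card_filter_geodesic_le (b c : V n) (k : ℕ) :
    #{x ∈ hammingSphere b k | hammingDist b x + hammingDist x c = hammingDist b c}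
      ≤ (hammingDist b c).choose k := by
  rw [← card_diffSet b c, ← card_filter_diffSet_subset b]
  exact Finset.card_le_card
    (monotone_filter_right _ fun _ _ => diffSet_subset_of_hammingDist_add_eq)

lemma card_hammingSphere_one_inter_le {b c : V n} (hbc : b ≠ c) :
    #(hammingSphere b 1 ∩ hammingSphere c 1) ≤ if hammingDist b c = 2 then 2 else 0 := by
  split_ifs with h
  · calc #(hammingSphere b 1 ∩ hammingSphere c 1)
        ≤ #{x ∈ hammingSphere b 1 | hammingDist b x + hammingDist x c = hammingDist b c} := by
          refine card_le_card fun x hx => ?_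
          simp only [Finset.mem_inter, mem_filter, mem_hammingSphere] at hx ⊢
          rw [hx.1, hammingDist_comm, hx.2, h]
          exact ⟨rfl, rfl⟩
      _ ≤ 2 := by simpa [h] using card_filter_geodesic_le b c 1
  · refine Nat.le_zero.2 (card_eq_zero.2 (eq_empty_of_forall_notMem fun x hx => ?_))
    simp only [Finset.mem_inter, mem_hammingSphere] at hx
    have hsum := hammingDist_add_two_mul_card_inter b x c
    have hle : #(diffSet b x ∩ diffSet x c) ≤ 1 :=
      (Finset.card_le_card Finset.inter_subset_left).trans (card_diffSet b x ▸ hx.1.le)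
    have := hammingDist_comm x c
    have := hammingDist_ne_zero.2 hbc
    omega

lemma card_hammingSphere_one_filter_le_three {w b : V n} (hwb : 2 ≤ hammingDist w b) :
    #{x ∈ hammingSphere b 1 | hammingDist w x ≤ 2} ≤ 3 := by
  set T := {x ∈ hammingSphere b 1 | hammingDist w x ≤ 2}
  -- a neighbour of `b` is one step closer to or farther from `w`; only the first fits in the ball
  have hgeod : ∀ x ∈ T, hammingDist b x + hammingDist x w = hammingDist b w := by
    intro x hx
    simp only [T, mem_filter, mem_hammingSphere] at hx
    have hsum := hammingDist_add_two_mul_card_inter b x w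
    have hle : #(diffSet b x ∩ diffSet x w) ≤ 1 :=
      (Finset.card_le_card Finset.inter_subset_left).trans (card_diffSet b x ▸ hx.1.le)
    have := hammingDist_comm x w
    have := hammingDist_comm b w
    omega
  obtain hT | ⟨x, hx⟩ := T.eq_empty_or_nonempty
  · simp [hT]
  calc #T ≤ #{x ∈ hammingSphere b 1 | hammingDist b x + hammingDist x w = hammingDist b w} :=
        card_le_card fun y hy => mem_filter.2 ⟨(mem_filter.1 hy).1, hgeod y hy⟩
    _ ≤ hammingDist b w := by simpa using card_filter_geodesic_le b w 1
    _ ≤ 3 := by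
        have := hgeod x hx
        simp only [T, mem_filter, mem_hammingSphere] at hx
        rw [hammingDist_comm x w] at this
        omega

lemma card_hammingSphere_two_inter_le_six {c c' : V n} (h : hammingDist c c' = 4) :
    #(hammingSphere c 2 ∩ hammingSphere c' 2) ≤ 6 := by
  calc #(hammingSphere c 2 ∩ hammingSphere c' 2)
      ≤ #{x ∈ hammingSphere c 2 | hammingDist c x + hammingDist x c' = hammingDist c c'} := by
        refine card_le_card fun x hx => ?_
        simp only [Finset.mem_inter, mem_filter, mem_hammingSphere] at hx ⊢
        rw [hx.1, hammingDist_comm, hx.2, h]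
        exact ⟨rfl, rfl⟩
    _ ≤ (hammingDist c c').choose 2 := card_filter_geodesic_le c c' 2
    _ = 6 := by rw [h]; rfl

def distTwoPairs (B : Finset (V n)) : ℕ := ∑ b ∈ B, #{c ∈ B | hammingDist b c = 2}

lemma sum_offDiag_card_inter_le_two_mul_distTwoPairs (B : Finset (V n)) :
    ∑ p ∈ B.offDiag, #(hammingSphere p.1 1 ∩ hammingSphere p.2 1) ≤ 2 * distTwoPairs B := by
  calc ∑ p ∈ B.offDiag, #(hammingSphere p.1 1 ∩ hammingSphere p.2 1)
      ≤ ∑ p ∈ B.offDiag, if hammingDist p.1 p.2 = 2 then 2 else 0 :=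
        sum_le_sum fun p hp => card_hammingSphere_one_inter_le (mem_offDiag.1 hp).2.2
    _ ≤ ∑ p ∈ B ×ˢ B, if hammingDist p.1 p.2 = 2 then 2 else 0 :=
        sum_le_sum_of_subset fun p hp => by
          have := mem_offDiag.1 hp
          exact mem_product.2 ⟨this.1, this.2.1⟩
    _ = 2 * distTwoPairs B := by
        simp only [sum_product, distTwoPairs, mul_sum, card_filter, mul_ite, mul_one, mul_zero]

lemma le_card_biUnion_add_distTwoPairs (w : V n) (B : Finset (V n))
    (hB : ∀ b ∈ B, 2 ≤ hammingDist w b) :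
    (n - 3) * #B ≤
      #(B.biUnion fun b => {x ∈ hammingSphere b 1 | 2 < hammingDist w x}) + distTwoPairs B := by
  set F := fun b => {x ∈ hammingSphere b 1 | 2 < hammingDist w x}
  have hF : ∀ b ∈ B, n - 3 ≤ #(F b) := by
    intro b hb
    have hcover : hammingSphere b 1 ⊆ F b ∪ {x ∈ hammingSphere b 1 | hammingDist w x ≤ 2} :=
      fun x hx => by simp [F, hx, lt_or_ge]
    have : n ≤ #(F b) + 3 := by
      simpa [card_hammingSphere] using (Finset.card_le_card hcover).trans
        ((Finset.card_union_le _ _).trans (Nat.add_le_add_left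
          (card_hammingSphere_one_filter_le_three (hB b hb)) _))
    omega
  have hpairs : ∑ p ∈ B.offDiag, #(F p.1 ∩ F p.2) ≤ 2 * distTwoPairs B :=
    (sum_le_sum fun _ _ => Finset.card_le_card
      (inter_subset_inter (filter_subset _ _) (filter_subset _ _))).trans
        (sum_offDiag_card_inter_le_two_mul_distTwoPairs B)
  have hsum : #B • (n - 3) ≤ ∑ b ∈ B, #(F b) := card_nsmul_le_sum B _ _ hF
  have := two_mul_sum_card_le_two_mul_card_biUnion_add_sum_offDiag B F
  rw [smul_eq_mul, mul_comm] at hsum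
  omega

section PairBound

variable {t : ℕ} {B : Finset (V n)}

lemma card_distTwo_sq_add_le (hB : ∀ x, #{c ∈ B | hammingDist x c = 1} ≤ t) {b : V n}
    (hb : b ∈ B) :
    #{c ∈ B | hammingDist b c = 2} ^ 2 + 2 * #{c ∈ B | hammingDist b c = 2} ≤
      #{p ∈ B ×ˢ B | hammingDist b p.1 = 2 ∧ hammingDist b p.2 = 2 ∧ hammingDist p.1 p.2 = 4} +
        2 * t * #{c ∈ B | hammingDist b c = 2} := by
  set N := {c ∈ B | hammingDist b c = 2}
  set far := {p ∈ B ×ˢ B | hammingDist b p.1 = 2 ∧ hammingDist b p.2 = 2 ∧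
    hammingDist p.1 p.2 = 4}
  set N' : Fin n → Finset (V n) := fun i => {c ∈ N | i ∈ diffSet b c}
  -- `b` and all of `N' i` are neighbours of `flipCoords {i} b`
  have hN' : ∀ i, #(N' i) + 1 ≤ t := by
    intro i
    have hsub : insert b (N' i) ⊆ {c ∈ B | hammingDist (flipCoords {i} b) c = 1} := by
      intro c hc
      rcases Finset.mem_insert.1 hc with rfl | hc
      · simp [hb, hammingDist_comm, hammingDist_flipCoords]
      · simp only [N', N, mem_filter] at hc
        have := hammingDist_flipCoords_singleton_add_one hc.2
        exact mem_filter.2 ⟨hc.1.1, by omega⟩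
    have hbN : b ∉ N' i := by simp [N', N]
    exact (card_insert_of_notMem hbN).symm.le.trans ((Finset.card_le_card hsub).trans (hB _))
  have hsum : ∑ i, #(N' i) = 2 * #N := by
    have := sum_card_bipartiteAbove_eq_sum_card_bipartiteBelow (fun i c => i ∈ diffSet b c)
      (s := univ) (t := N)
    simp only [bipartiteAbove, bipartiteBelow, filter_mem_eq_inter, Finset.univ_inter] at this
    calc ∑ i, #(N' i) = ∑ c ∈ N, #(diffSet b c) := this
      _ = ∑ c ∈ N, 2 := sum_congr rfl fun c hc => (mem_filter.1 hc).2
      _ = 2 * #N := by rw [sum_const, smul_eq_mul, mul_comm]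
  have hsq : #N ^ 2 ≤ #far + ∑ i, #(N' i) ^ 2 := by
    have hcover : N ×ˢ N ⊆ far ∪ univ.biUnion fun i => N' i ×ˢ N' i := by
      rintro ⟨c, c'⟩ hp
      simp only [N, mem_product, mem_filter] at hp
      by_cases hcommon : ∃ i, i ∈ diffSet b c ∧ i ∈ diffSet b c'
      · obtain ⟨i, hi, hi'⟩ := hcommon
        exact mem_union_right _ (mem_biUnion.2 ⟨i, Finset.mem_univ _, by
          simp only [N', N, mem_product, mem_filter]
          exact ⟨⟨hp.1, hi⟩, hp.2, hi'⟩⟩)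
      · have hinter : diffSet c b ∩ diffSet b c' = ∅ := by
          rw [diffSet_comm]
          exact eq_empty_of_forall_notMem fun i hi => hcommon ⟨i, mem_inter.1 hi⟩
        have := hammingDist_add_two_mul_card_inter c b c'
        rw [hinter, Finset.card_empty, hammingDist_comm c b, hp.1.2, hp.2.2] at this
        exact mem_union_left _
          (mem_filter.2 ⟨mem_product.2 ⟨hp.1.1, hp.2.1⟩, hp.1.2, hp.2.2, by omega⟩)
    calc #N ^ 2 = #(N ×ˢ N) := by rw [card_product, sq]
      _ ≤ #far + ∑ i, #(N' i ×ˢ N' i) :=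
          (Finset.card_le_card hcover).trans
            ((Finset.card_union_le _ _).trans (Nat.add_le_add_left card_biUnion_le _))
      _ = #far + ∑ i, #(N' i) ^ 2 := by simp only [card_product, sq]
  have hdeg : ∑ i, #(N' i) ^ 2 + ∑ i, #(N' i) ≤ t * ∑ i, #(N' i) := by
    rw [← sum_add_distrib, mul_sum]
    exact sum_le_sum fun i _ => by nlinarith [hN' i]
  rw [hsum] at hdeg
  nlinarith

lemma sum_card_filter_midpoint_le (B : Finset (V n)) :
    ∑ b ∈ B, #{p ∈ B ×ˢ B | hammingDist b p.1 = 2 ∧ hammingDist b p.2 = 2 ∧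
      hammingDist p.1 p.2 = 4} ≤ 6 * #B ^ 2 := by
  calc _ = ∑ p ∈ B ×ˢ B, #{b ∈ B | hammingDist b p.1 = 2 ∧ hammingDist b p.2 = 2 ∧
        hammingDist p.1 p.2 = 4} :=
        sum_card_bipartiteAbove_eq_sum_card_bipartiteBelow _
    _ ≤ ∑ _p ∈ B ×ˢ B, 6 := sum_le_sum fun p _ => ?_
    _ = 6 * #B ^ 2 := by rw [sum_const, card_product, smul_eq_mul, sq, mul_comm]
  by_cases h4 : hammingDist p.1 p.2 = 4
  · refine (Finset.card_le_card fun b hb => ?_).trans (card_hammingSphere_two_inter_le_six h4)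
    simp only [mem_filter] at hb
    simp [hammingDist_comm _ b, hb.2.1, hb.2.2.1]
  · simp [h4]

lemma distTwoPairs_sq_le (hB : ∀ x, #{c ∈ B | hammingDist x c = 1} ≤ t) :
    distTwoPairs B ^ 2 ≤ 6 * #B ^ 3 + 2 * t * #B * distTwoPairs B := by
  have hper := sum_le_sum fun b hb => card_distTwo_sq_add_le hB (B := B) (b := b) hb
  rw [sum_add_distrib, sum_add_distrib, ← mul_sum, ← mul_sum] at hper
  have hCS := sq_sum_le_card_mul_sum_sq (s := B) (f := fun b => #{c ∈ B | hammingDist b c = 2})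
  have := sum_card_filter_midpoint_le B
  rw [← distTwoPairs] at hper hCS
  nlinarith

lemma distTwoPairs_le (hB : ∀ x, #{c ∈ B | hammingDist x c = 1} ≤ t) :
    (distTwoPairs B : ℝ) ≤ 2 * t * #B + 3 * #B * √(#B : ℝ) := by
  have hsq : ((distTwoPairs B : ℕ) : ℝ) ^ 2 ≤ 6 * (#B : ℝ) ^ 3 + 2 * t * #B * distTwoPairs B :=
    mod_cast distTwoPairs_sq_le hB
  set m : ℝ := ((#B : ℕ) : ℝ)
  set P : ℝ := ((distTwoPairs B : ℕ) : ℝ)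
  have hm : 0 ≤ m := Nat.cast_nonneg _
  have hb : 0 ≤ 2 * t * m := by positivity
  have hc : 0 ≤ 3 * m * √m := by positivity
  by_contra! hlt
  have h1 : P * (2 * t * m + 3 * m * √m) < P * P := mul_lt_mul_of_pos_left hlt (by linarith)
  have h2 : (3 * m * √m) * (3 * m * √m) ≤ P * (3 * m * √m) :=
    mul_le_mul_of_nonneg_right (by linarith) hc
  have h3 : (3 * m * √m) * (3 * m * √m) = 9 * m ^ 3 := by
    rw [show (3 * m * √m) * (3 * m * √m) = 9 * m ^ 2 * (√m * √m) by ring,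
      Real.mul_self_sqrt hm]
    ring
  nlinarith

end PairBound

section Neighbourhood

variable (A : Finset (V n)) (w : V n)

lemma card_filter_flipCoords_singleton_mem :
    #{i | flipCoords {i} w ∈ A} = #{a ∈ A | hammingDist w a = 1} := by
  refine card_bij (fun i _ => flipCoords {i} w) (fun i hi => ?_) (fun i _ j _ h => ?_)
    fun a ha => ?_
  · simp only [mem_filter, Finset.mem_univ, true_and] at hi ⊢
    exact ⟨hi, by rw [hammingDist_flipCoords, Finset.card_singleton]⟩
  · simpa [diffSet_flipCoords] using congrArg (diffSet w) h
  · obtain ⟨i, hi⟩ := card_eq_one.1 ((card_diffSet w a).trans (mem_filter.1 ha).2)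
    refine ⟨i, ?_, by rw [← hi, flipCoords_diffSet]⟩
    simpa [← hi, flipCoords_diffSet] using (mem_filter.1 ha).1

lemma choose_two_le_card_biUnion_inter_add :
    n.choose 2 ≤ #(A.biUnion (hammingSphere · 1) ∩ hammingSphere w 2) +
      (n - #{a ∈ A | hammingDist w a = 1}).choose 2 := by
  have hcount :=
    card_filter_add_card_filter_not (s := univ) fun i : Fin n => flipCoords {i} w ∈ A
  rw [card_filter_flipCoords_singleton_mem, card_univ, Fintype.card_fin] at hcount
  set T : Finset (Fin n) := {i | flipCoords {i} w ∉ A}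
  have hT : #T = n - #{a ∈ A | hammingDist w a = 1} := by omega
  have hsplit := card_filter_add_card_filter_not (s := hammingSphere w 2) (diffSet w · ⊆ T)
  rw [card_filter_diffSet_subset, card_hammingSphere, hT] at hsplit
  -- `x` at distance 2 from `w` is adjacent to `flipCoords {i} w` for each `i ∈ diffSet w x`
  have hsub : {x ∈ hammingSphere w 2 | ¬ diffSet w x ⊆ T} ⊆
      A.biUnion (hammingSphere · 1) ∩ hammingSphere w 2 := by
    intro x hx
    simp only [mem_filter, mem_hammingSphere, Finset.not_subset] at hx
    obtain ⟨hx2, i, hi, hiT⟩ := hx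
    have := hammingDist_flipCoords_singleton_add_one hi
    refine mem_inter.2 ⟨mem_biUnion.2 ⟨flipCoords {i} w, ?_, ?_⟩, by simpa using hx2⟩
    · simpa [T] using hiT
    · simp only [mem_hammingSphere]
      omega
  have := Finset.card_le_card hsub
  omega

theorem choose_two_add_le_card_biUnion :
    n.choose 2 + (n - 3) * #{a ∈ A | 2 ≤ hammingDist w a} ≤
      #(A.biUnion (hammingSphere · 1)) + (n - #{a ∈ A | hammingDist w a = 1}).choose 2 +
        distTwoPairs {a ∈ A | 2 ≤ hammingDist w a} := by
  set B := {a ∈ A | 2 ≤ hammingDist w a}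
  have h₁ := choose_two_le_card_biUnion_inter_add A w
  have h₂ := le_card_biUnion_add_distTwoPairs w B fun b hb => (mem_filter.1 hb).2
  set X₁ := A.biUnion (hammingSphere · 1) ∩ hammingSphere w 2
  set X₂ := B.biUnion fun b => {x ∈ hammingSphere b 1 | 2 < hammingDist w x}
  have hdisj : Disjoint X₁ X₂ := by
    refine Finset.disjoint_left.2 fun x hx₁ hx₂ => ?_
    obtain ⟨b, -, hx⟩ := mem_biUnion.1 hx₂
    simp only [X₁, Finset.mem_inter, mem_hammingSphere, mem_filter] at hx₁ hx
    omega
  have hsub : X₁ ∪ X₂ ⊆ A.biUnion (hammingSphere · 1) := by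
    refine union_subset inter_subset_left
      ((Finset.biUnion_mono fun _ _ => filter_subset _ _).trans ?_)
    exact biUnion_subset_biUnion_of_subset_left _ (filter_subset _ _)
  have := Finset.card_le_card hsub
  rw [card_union_of_disjoint hdisj] at this
  omega

lemma card_filter_hammingDist_one_add_two_le :
    #{a ∈ A | hammingDist w a = 1} + #{a ∈ A | 2 ≤ hammingDist w a} ≤ #A ∧
      #A ≤ #{a ∈ A | hammingDist w a = 1} + #{a ∈ A | 2 ≤ hammingDist w a} + 1 := by
  have hsplit : #{a ∈ A | hammingDist w a = 1} + #{a ∈ A | ¬ hammingDist w a = 1} = #A :=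
    card_filter_add_card_filter_not _
  have hle : {a ∈ A | 2 ≤ hammingDist w a} ⊆ {a ∈ A | ¬ hammingDist w a = 1} :=
    monotone_filter_right _ fun _ _ h => by omega
  have hge : {a ∈ A | ¬ hammingDist w a = 1} ⊆ insert w {a ∈ A | 2 ≤ hammingDist w a} := by
    intro a ha
    simp only [mem_filter, Finset.mem_insert] at ha ⊢
    by_cases haw : a = w
    · exact Or.inl haw
    · have := hammingDist_ne_zero.2 (Ne.symm haw)
      exact Or.inr ⟨ha.1, by omega⟩
  have := (Finset.card_le_card hge).trans (card_insert_le _ _)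
  have := Finset.card_le_card hle
  omega

lemma card_filter_filter_le_of_forall_ne {t : ℕ}
    (hw : ∀ x ≠ w, #{a ∈ A | hammingDist x a = 1} ≤ t) (x : V n) :
    #{c ∈ {a ∈ A | 2 ≤ hammingDist w a} | hammingDist x c = 1} ≤ t := by
  by_cases hxw : x = w
  · subst hxw
    rw [filter_filter, filter_false_of_mem fun a _ h => by omega, Finset.card_empty]
    exact Nat.zero_le _
  · exact (Finset.card_le_card (filter_subset_filter _ (filter_subset _ _))).trans (hw x hxw)

end Neighbourhood

lemma mem_nbhd_iff {v x : V n} : x ∈ nbhd n v ↔ hammingDist v x = 1 := by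
  simp only [nbhd, Q, SimpleGraph.mem_neighborSet, SimpleGraph.fromRel_adj, hammingDist_comm x v,
    or_self, and_iff_right_iff_imp]
  rintro h rfl
  simp at h

lemma nbhdSet_coe (A : Finset (V n)) :
    nbhdSet n A = ↑(A.biUnion (hammingSphere · 1)) := by
  ext x
  simp [nbhdSet, mem_nbhd_iff]

lemma coe_inter_nbhd (A : Finset (V n)) (x : V n) :
    ↑A ∩ nbhd n x = ↑{a ∈ A | hammingDist x a = 1} := by
  ext a
  simp [mem_nbhd_iff]

end Hypercube

lemma exists_forall_ne_le_of_not_two_gt {α β : Type*} [Nonempty α] [LinearOrder β] {f : α → β}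
    {t : β} (h : ¬ ∃ a b, a ≠ b ∧ t < f a ∧ t < f b) : ∃ w, ∀ x ≠ w, f x ≤ t := by
  by_cases hex : ∃ w, t < f w
  · obtain ⟨w, hw⟩ := hex
    exact ⟨w, fun x hx => not_lt.1 fun hx' => h ⟨x, w, hx, hx', hw⟩⟩
  · simp only [not_exists, not_lt] at hex
    exact ⟨Classical.arbitrary α, fun x _ => hex x⟩

lemma mul_sqrt_le_of_card_bounds {n d k t s P : ℝ} (hn : 3 ≤ n) (ht : 4 ≤ t) (htn : t ≤ n)
    (hd : 0 ≤ d) (hk : 0 ≤ k) (hdk : d + k ≤ n) (hdk' : n ≤ d + k + 1)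
    (hP : P ≤ 2 * t * k + 3 * k * √k)
    (hs : (n - 3) * k - (n - d) * (n - d - 1) / 2 - P ≤ s * n) :
    n * √(1 - 2 * s / n - 14 * √(t / n)) ≤ d := by
  set r := √n
  set q := √t
  have hr : r * r = n := Real.mul_self_sqrt (by linarith)
  have hq : q * q = t := Real.mul_self_sqrt (by linarith)
  have hr0 : 0 < r := Real.sqrt_pos.2 (by linarith)
  have hq2 : 2 ≤ q := Real.le_sqrt_of_sq_le (by linarith)
  have hqr : q ≤ r := Real.sqrt_le_sqrt htn
  have hqrn : 0 ≤ q * r * n := by positivity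
  have hkn : (n - 3) * (n - d - 1) ≤ (n - 3) * k :=
    mul_le_mul_of_nonneg_left (by linarith) (by linarith)
  have htk : t * k ≤ q * r * n := by
    rw [← hq]
    exact mul_le_mul (mul_le_mul_of_nonneg_left hqr (by linarith)) (by linarith) hk (by positivity)
  have hkk : k * √k ≤ n * r :=
    mul_le_mul (by linarith) (Real.sqrt_le_sqrt (by linarith)) (Real.sqrt_nonneg _) (by linarith)
  have hnr : n * r ≤ q * r * n / 2 := by nlinarith
  have hn' : n ≤ q * r * n / 2 := by nlinarith
  -- `hs` gives `n² - 2sn ≤ d² + 7n + 2P`, and `7n + 2P ≤ 10.5 qrn` since `t ≤ qr` and `q ≥ 2`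
  have hmain : n ^ 2 - 2 * s * n - 14 * q * r * n ≤ d ^ 2 := by linarith
  have hθ : n ^ 2 * (1 - 2 * s / n - 14 * √(t / n)) = n ^ 2 - 2 * s * n - 14 * q * r * n := by
    have hsqrt : √(t / n) = q / r := Real.sqrt_div' _ (by linarith)
    rw [hsqrt]
    field_simp
    linear_combination 14 * q * hr
  calc n * √(1 - 2 * s / n - 14 * √(t / n))
      = √(n ^ 2 * (1 - 2 * s / n - 14 * √(t / n))) := by
        rw [Real.sqrt_mul (sq_nonneg n), Real.sqrt_sq (by linarith)]
    _ ≤ √(d ^ 2) := Real.sqrt_le_sqrt (hθ ▸ hmain)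
    _ = d := Real.sqrt_sq hd

open Hypercube

theorem one_stab_general
    (t : ℕ → ℕ) (ht5 : ∀ n, 5 ≤ t n)
    (hto : (fun n => (t n : ℝ)) =o[atTop] fun n => (n : ℝ))
    (s : ℕ → ℝ) :
    ∀ᶠ n : ℕ in atTop, ∀ A : Set (V n),
      A.ncard = n →
      ((nbhdSet n A).ncard : ℝ) ≤ (n.choose 2 : ℝ) + s n * n →
      (¬ ∃ w₁ w₂ : V n, w₁ ≠ w₂ ∧ (t n : ℝ) < ((A ∩ nbhd n w₁).ncard : ℝ) ∧
          (t n : ℝ) < ((A ∩ nbhd n w₂).ncard : ℝ)) →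
      ∃ w : V n,
        (n : ℝ) * Real.sqrt (1 - 2 * s n / n - 14 * Real.sqrt (t n / n)) ≤
          ((nbhd n w ∩ A).ncard : ℝ) := by
  have htn : ∀ᶠ n : ℕ in atTop, (t n : ℝ) ≤ n := by
    filter_upwards [hto.def one_pos] with n hn
    simpa using hn
  filter_upwards [htn, eventually_ge_atTop 3] with n htn hn A hA hΓ hmono
  obtain ⟨A, rfl⟩ : ∃ A' : Finset (V n), ↑A' = A := ⟨A.toFinite.toFinset, by simp⟩
  obtain ⟨w, hw⟩ := exists_forall_ne_le_of_not_two_gt hmono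
  simp only [coe_inter_nbhd, ncard_coe_finset, Nat.cast_le] at hw hA
  rw [nbhdSet_coe, ncard_coe_finset] at hΓ
  refine ⟨w, ?_⟩
  rw [Set.inter_comm, coe_inter_nbhd, ncard_coe_finset]
  have hcomb := choose_two_add_le_card_biUnion A w
  have hP := distTwoPairs_le (card_filter_filter_le_of_forall_ne A w hw)
  obtain ⟨hlo, hhi⟩ := card_filter_hammingDist_one_add_two_le A w
  have hcast := (Nat.cast_le (α := ℝ)).2 hcomb
  push_cast [Nat.cast_sub hn, Nat.cast_sub (show #{a ∈ A | hammingDist w a = 1} ≤ n by omega),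
    Nat.cast_choose_two] at hcast hΓ
  have ht4 : (4 : ℝ) ≤ t n := by exact_mod_cast (ht5 n).trans' (by norm_num)
  refine mul_sqrt_le_of_card_bounds (by exact_mod_cast hn) ht4 htn (Nat.cast_nonneg _)
    (Nat.cast_nonneg _) (by exact_mod_cast hA ▸ hlo) (by exact_mod_cast hA ▸ hhi) hP ?_
  linarith

/-- Lemma 3.7 (1-stab): a weaker stability result for sets whose neighbourhood can be large,
assuming the set does not cluster around two different vertices. -/
theorem one_stab
    (t : ℕ → ℕ) (ht5 : ∀ n, 5 ≤ t n) (ht : Tendsto t atTop atTop)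
    (hto : (fun n => (t n : ℝ)) =o[atTop] fun n => (n : ℝ))
    (s : ℕ → ℝ)
    (hst : ∀ n : ℕ, 0 ≤ 1 - 2 * s n / n - 14 * Real.sqrt (t n / n)) :
    ∀ᶠ n : ℕ in atTop, ∀ A : Set (V n),
      A.ncard = n →
      ((nbhdSet n A).ncard : ℝ) ≤ (n.choose 2 : ℝ) + s n * n →
      (¬ ∃ w₁ w₂ : V n, w₁ ≠ w₂ ∧ (t n : ℝ) < ((A ∩ nbhd n w₁).ncard : ℝ) ∧
          (t n : ℝ) < ((A ∩ nbhd n w₂).ncard : ℝ)) →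
      ∃ w : V n,
        (n : ℝ) * Real.sqrt (1 - 2 * s n / n - 14 * Real.sqrt (t n / n)) ≤
          ((nbhd n w ∩ A).ncard : ℝ) :=
  one_stab_general t ht5 hto s
end
end
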